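/- arXiv:1405.7754 — 2 statements merged into one kernel-verified Lean document; each statement's English description precedes it below -/
import Mathlib

section
/- Let u be a real-valued C^2 function on an open set D ⊆ ℝ² with Δu = 0 (u harmonic), and let R > 0. Define w(z) = |∇u(z)|/(u(z) + R) on the set where ∇u(z) ≠ 0 and u(z) + R > 0. Then Δ(log w) = w² at every such point. -/
/-!
Near a point where `∇u ≠ 0`, `log w = log |∇u| - log (u + R)`. Since `u` is harmonic,
`conj (∇u) = u_x - i u_y` is holomorphic, so `log |∇u|` is harmonic. The chain rule
`Δ (log φ) = Δφ / φ - |∇φ|² / φ²` applied to `φ = u + R`, with `Δφ = Δu = 0`, gives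
`-Δ log (u + R) = |∇u|² / (u + R)² = w²`.
-/

open Complex

/-- The Laplacian of a function `u : ℂ → ℝ` (identifying `ℂ` with `ℝ²`):
`Δu = ∂²u/∂x² + ∂²u/∂y²`, expressed via the second iterated Fréchet derivative. -/
noncomputable def lap (u : ℂ → ℝ) (z : ℂ) : ℝ :=
  iteratedFDeriv ℝ 2 u z ![1, 1] + iteratedFDeriv ℝ 2 u z ![Complex.I, Complex.I]

/-- The gradient of `u : ℂ → ℝ` as a complex number `uₓ + i·u_y`. -/
noncomputable def grad (u : ℂ → ℝ) (z : ℂ) : ℂ :=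
  (fderiv ℝ u z 1 : ℂ) + (fderiv ℝ u z Complex.I : ℂ) * Complex.I

open Filter Topology InnerProductSpace Laplacian ComplexConjugate

section

variable {E : Type*} [NormedAddCommGroup E] [NormedSpace ℝ E]

theorem iteratedFDeriv_two_comp_apply_self {f : E → ℝ} {g g' : ℝ → ℝ} {g'' : ℝ} {x : E}
    (hf : ContDiffAt ℝ 2 f x) (hg : ∀ᶠ t in 𝓝 (f x), HasDerivAt g (g' t) t)
    (hg' : HasDerivAt g' g'' (f x)) (v : E) :
    iteratedFDeriv ℝ 2 (g ∘ f) x ![v, v] =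
      g' (f x) * iteratedFDeriv ℝ 2 f x ![v, v] + g'' * fderiv ℝ f x v ^ 2 := by
  have hf' : ∀ᶠ y in 𝓝 x, HasFDerivAt f (fderiv ℝ f y) y :=
    (hf.eventually (by simp)).mono fun y hy => (hy.differentiableAt (by simp)).hasFDerivAt
  have hgf : ∀ᶠ y in 𝓝 x, HasDerivAt g (g' (f y)) (f y) := hf.continuousAt.eventually hg
  have hD : fderiv ℝ (g ∘ f) =ᶠ[𝓝 x] fun y => g' (f y) • fderiv ℝ f y := by
    filter_upwards [hf', hgf] with y hfy hgy
    exact (hgy.comp_hasFDerivAt y hfy).fderiv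
  have hD2 : HasFDerivAt (fun y => g' (f y) • fderiv ℝ f y)
      (g' (f x) • fderiv ℝ (fderiv ℝ f) x + (g'' • fderiv ℝ f x).smulRight (fderiv ℝ f x)) x :=
    (hg'.comp_hasFDerivAt x hf'.self_of_nhds).smul
      ((hf.fderiv_right le_rfl).differentiableAt one_ne_zero).hasFDerivAt
  simp only [iteratedFDeriv_two_apply, Matrix.cons_val_zero, Matrix.cons_val_one,
    hD.fderiv_eq, hD2.fderiv, add_apply, smul_apply, ContinuousLinearMap.smulRight_apply,
    smul_eq_mul]
  ring

end

section

variable {E : Type*} [NormedAddCommGroup E] [InnerProductSpace ℝ E] [FiniteDimensional ℝ E]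

theorem OrthonormalBasis.sum_sq_apply {ι : Type*} [Fintype ι] (b : OrthonormalBasis ι ℝ E)
    (L : E →L[ℝ] ℝ) : ∑ i, L (b i) ^ 2 = ‖L‖ ^ 2 := by
  rw [← (toDual ℝ E).symm.norm_map L, ← b.sum_sq_inner_left]
  simp [toDual_symm_apply]

theorem ContDiffAt.laplacian_comp {f : E → ℝ} {g g' : ℝ → ℝ} {g'' : ℝ} {x : E}
    (hf : ContDiffAt ℝ 2 f x) (hg : ∀ᶠ t in 𝓝 (f x), HasDerivAt g (g' t) t)
    (hg' : HasDerivAt g' g'' (f x)) :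
    Δ (g ∘ f) x = g' (f x) * Δ f x + g'' * ‖fderiv ℝ f x‖ ^ 2 := by
  simp only [laplacian_eq_iteratedFDeriv_stdOrthonormalBasis,
    iteratedFDeriv_two_comp_apply_self hf hg hg', Finset.sum_add_distrib, ← Finset.mul_sum,
    OrthonormalBasis.sum_sq_apply]

theorem ContDiffAt.laplacian_log {f : E → ℝ} {x : E} (hf : ContDiffAt ℝ 2 f x) (hx : f x ≠ 0) :
    Δ (fun y => Real.log (f y)) x = Δ f x / f x - ‖fderiv ℝ f x‖ ^ 2 / f x ^ 2 := by
  have hlog : ∀ᶠ t in 𝓝 (f x), HasDerivAt Real.log t⁻¹ t :=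
    (eventually_ne_nhds hx).mono fun t ht => Real.hasDerivAt_log ht
  rw [show (fun y => Real.log (f y)) = Real.log ∘ f from rfl,
    hf.laplacian_comp hlog (hasDerivAt_inv hx)]
  ring

end

theorem lap_eq_laplacian (u : ℂ → ℝ) : lap u = Δ u := by
  ext z
  simp [lap, laplacian_eq_iteratedFDeriv_complexPlane]

theorem norm_grad (u : ℂ → ℝ) (z : ℂ) : ‖grad u z‖ = ‖fderiv ℝ u z‖ := by
  refine (pow_left_inj₀ (norm_nonneg _) (norm_nonneg _) two_ne_zero).mp ?_
  rw [← orthonormalBasisOneI.sum_sq_apply, grad, Complex.sq_norm, normSq_add_mul_I,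
    Fin.sum_univ_two]
  simp

theorem conj_grad (u : ℂ → ℝ) (z : ℂ) :
    conj (grad u z) = fderiv ℝ u z 1 - I * fderiv ℝ u z I := by
  simp only [grad, map_add, map_mul, conj_ofReal, conj_I]
  ring

theorem InnerProductSpace.HarmonicAt.analyticAt_conj_grad {u : ℂ → ℝ} {z : ℂ}
    (hu : HarmonicAt u z) : AnalyticAt ℂ (fun ζ => conj (grad u ζ)) z := by
  simpa only [conj_grad] using HarmonicAt.analyticAt_complex_partial hu

theorem InnerProductSpace.HarmonicAt.harmonicAt_log_norm_grad {u : ℂ → ℝ} {z : ℂ}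
    (hu : HarmonicAt u z) (hz : grad u z ≠ 0) :
    HarmonicAt (fun ζ => Real.log ‖grad u ζ‖) z := by
  simpa using hu.analyticAt_conj_grad.harmonicAt_log_norm (by simpa using hz)

theorem stmt0_general (D : Set ℂ) (hD : IsOpen D) (u : ℂ → ℝ)
    (hu : ContDiffOn ℝ 2 u D) (hharm : ∀ z ∈ D, lap u z = 0)
    (R : ℝ)
    (w : ℂ → ℝ) (hw : ∀ z, w z = ‖grad u z‖ / (u z + R)) :
    ∀ z ∈ D, grad u z ≠ 0 → 0 < u z + R →
      lap (fun ζ => Real.log (w ζ)) z = (w z) ^ 2 := by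
  intro z hz hgrad hpos
  have hu₂ : ContDiffAt ℝ 2 u z := hu.contDiffAt (hD.mem_nhds hz)
  have hu_harm : HarmonicAt u z := by
    refine ⟨hu₂, ?_⟩
    filter_upwards [hD.mem_nhds hz] with ζ hζ
    rw [← lap_eq_laplacian]
    exact hharm ζ hζ
  set φ : ℂ → ℝ := fun ζ => u ζ + R
  have hφ : ContDiffAt ℝ 2 φ z := hu₂.add contDiffAt_const
  have hΔφ : Δ φ z = 0 := by
    rw [show φ = u + fun _ => R from rfl, hu₂.laplacian_add contDiffAt_const,
      ← lap_eq_laplacian, hharm z hz, laplacian_const]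
    simp
  have hlogw : (fun ζ => Real.log (w ζ)) =ᶠ[𝓝 z]
      (fun ζ => Real.log ‖grad u ζ‖) - fun ζ => Real.log (φ ζ) := by
    filter_upwards [hu_harm.analyticAt_conj_grad.continuousAt.eventually_ne
      (by simpa using hgrad : conj (grad u z) ≠ 0),
      hφ.continuousAt.eventually_ne hpos.ne'] with ζ hgζ hφζ
    rw [hw, Pi.sub_apply, Real.log_div (by simpa using hgζ) hφζ]
  have hlog := hu_harm.harmonicAt_log_norm_grad hgrad
  rw [lap_eq_laplacian, (laplacian_congr_nhds hlogw).eq_of_nhds,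
    hlog.1.laplacian_sub (hφ.log hpos.ne'), hlog.2.eq_of_nhds, hφ.laplacian_log hpos.ne',
    hΔφ, fderiv_add_const, hw, ← norm_grad]
  simp only [φ, Pi.zero_apply, div_pow]
  ring

/-- If `u` is harmonic and `C²` on an open set `D ⊆ ℝ²` and `R > 0`, then
`w = |∇u|/(u + R)` satisfies `Δ(log w) = w²` at every point of `D` where
`∇u ≠ 0` and `u + R > 0`. -/
theorem stmt0 (D : Set ℂ) (hD : IsOpen D) (u : ℂ → ℝ)
    (hu : ContDiffOn ℝ 2 u D) (hharm : ∀ z ∈ D, lap u z = 0)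
    (R : ℝ) (hR : 0 < R)
    (w : ℂ → ℝ) (hw : ∀ z, w z = ‖grad u z‖ / (u z + R)) :
    ∀ z ∈ D, grad u z ≠ 0 → 0 < u z + R →
      lap (fun ζ => Real.log (w ζ)) z = (w z) ^ 2 :=
  stmt0_general D hD u hu hharm R w hw
end

section
/- Let w, v : K → ℝ be positive C² functions on a bounded open set K ⊆ ℝ² with Δ(log w) = w² and Δ(log v) = v² on K. Suppose log w − log v extends continuously to the closure of K, vanishes on ∂K, and is positive at some interior point. Then a contradiction follows; i.e. if log w − log v ≤ 0 on ∂K and Δ(log w − log v) ≥ w² − v² > 0 wherever w > v, then w ≤ v throughout K. -/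
open Complex

/-!
Put `u = log w - log v`. On `K` it is `C²` with `Δu = w² - v²`, which is positive exactly where
`u > 0`. If `u` were positive somewhere, its maximum over the compact set `closure K` would be
positive, hence attained off `∂K`, i.e. at an interior local maximum, where `Δu ≤ 0`.
-/

open Filter Topology

theorem IsLocalMax.deriv_deriv_nonpos {g : ℝ → ℝ} {t : ℝ} (hmax : IsLocalMax g t)
    (hc : ContinuousAt g t) : deriv (deriv g) t ≤ 0 := by
  -- If `g'' t > 0`, the second derivative test makes `t` also a local minimum, so `g` is
  -- locally constant and `g'' t = 0`.
  by_contra! hpos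
  have hmin : IsLocalMin g t := isLocalMin_of_deriv_deriv_pos hpos hmax.deriv_eq_zero hc
  have hconst : g =ᶠ[𝓝 t] fun _ => g t := by
    filter_upwards [hmin, hmax] with s hs₁ hs₂ using le_antisymm hs₂ hs₁
  have : deriv (deriv g) t = 0 := by
    rw [hconst.deriv.deriv_eq]
    simp
  exact hpos.ne' this

section LineRestriction

variable {E : Type*} [NormedAddCommGroup E] [NormedSpace ℝ E] {f : E → ℝ} {x : E}

theorem deriv_deriv_comp_add_smul (hf : ContDiffAt ℝ 2 f x) (e : E) :
    deriv (deriv fun t : ℝ => f (x + t • e)) 0 = fderiv ℝ (fderiv ℝ f) x e e := by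
  have hline : ∀ t : ℝ, HasDerivAt (fun t : ℝ => x + t • e) e t := fun t => by
    simpa using ((hasDerivAt_id t).smul_const e).const_add x
  have hline_tendsto : Tendsto (fun t : ℝ => x + t • e) (𝓝 0) (𝓝 x) := by
    simpa using (hline 0).continuousAt.tendsto
  have hsmooth : ∀ᶠ y in 𝓝 x, ContDiffAt ℝ 2 f y := hf.eventually (by simp)
  have hderiv : deriv (fun t : ℝ => f (x + t • e)) =ᶠ[𝓝 0]
      fun t => fderiv ℝ f (x + t • e) e := by
    filter_upwards [hline_tendsto.eventually hsmooth] with t ht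
    exact ((ht.differentiableAt two_ne_zero).hasFDerivAt.comp_hasDerivAt t (hline t)).deriv
  have hf' : HasFDerivAt (fderiv ℝ f) (fderiv ℝ (fderiv ℝ f) x) (x + (0 : ℝ) • e) := by
    rw [zero_smul, add_zero]
    exact ((hf.fderiv_right one_add_one_eq_two.le).differentiableAt one_ne_zero).hasFDerivAt
  have hderiv' : HasDerivAt (fun t : ℝ => fderiv ℝ f (x + t • e))
      (fderiv ℝ (fderiv ℝ f) x e) 0 := hf'.comp_hasDerivAt (x := (0 : ℝ)) (hline 0)
  rw [hderiv.deriv_eq, (hderiv'.clm_apply (hasDerivAt_const (0 : ℝ) e)).deriv]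
  simp

theorem IsLocalMax.iteratedFDeriv_two_nonpos (hmax : IsLocalMax f x) (hf : ContDiffAt ℝ 2 f x)
    (e : E) : iteratedFDeriv ℝ 2 f x ![e, e] ≤ 0 := by
  have hline : ContinuousAt (fun t : ℝ => x + t • e) 0 := by fun_prop
  have hx : x + (0 : ℝ) • e = x := by rw [zero_smul, add_zero]
  simp only [iteratedFDeriv_two_apply, Matrix.cons_val_zero, Matrix.cons_val_one]
  rw [← deriv_deriv_comp_add_smul hf e]
  refine IsLocalMax.deriv_deriv_nonpos ?_ ?_
  · exact IsLocalMax.comp_continuous (by rwa [hx]) hline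
  · exact ContinuousAt.comp (by rw [hx]; exact hf.continuousAt) hline

end LineRestriction

theorem IsLocalMax.lap_nonpos {u : ℂ → ℝ} {x : ℂ} (hmax : IsLocalMax u x)
    (hu : ContDiffAt ℝ 2 u x) : lap u x ≤ 0 :=
  add_nonpos (hmax.iteratedFDeriv_two_nonpos hu 1) (hmax.iteratedFDeriv_two_nonpos hu I)

theorem lap_sub {f g : ℂ → ℝ} {x : ℂ} (hf : ContDiffAt ℝ 2 f x) (hg : ContDiffAt ℝ 2 g x) :
    lap (fun z => f z - g z) x = lap f x - lap g x := by
  change lap (f - g) x = _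
  simp only [lap, iteratedFDeriv_sub_apply hf hg, sub_apply]
  ring

theorem nonpos_of_lap_pos_of_frontier_nonpos {K : Set ℂ} (hK : IsOpen K)
    (hKb : Bornology.IsBounded K) {u : ℂ → ℝ} (hu : ContDiffOn ℝ 2 u K)
    (hcont : ContinuousOn u (closure K)) (hbdry : ∀ z ∈ frontier K, u z ≤ 0)
    (hlap : ∀ z ∈ K, 0 < u z → 0 < lap u z) : ∀ z ∈ K, u z ≤ 0 := by
  intro z₀ hz₀
  by_contra! hpos
  obtain ⟨x, hx_cl, hx_max⟩ := hKb.isCompact_closure.exists_isMaxOn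
    ⟨z₀, subset_closure hz₀⟩ hcont
  have hux : 0 < u x := hpos.trans_le (hx_max (subset_closure hz₀))
  have hxK : x ∈ K := by
    by_contra hxK
    have hx_fr : x ∈ frontier K := by
      rw [frontier, hK.interior_eq]
      exact ⟨hx_cl, hxK⟩
    exact (hbdry x hx_fr).not_gt hux
  have hmax : IsLocalMax u x :=
    hx_max.isLocalMax (mem_of_superset (hK.mem_nhds hxK) subset_closure)
  exact (hmax.lap_nonpos (hu.contDiffAt (hK.mem_nhds hxK))).not_gt (hlap x hxK hux)

/-- Comparison principle for the Liouville-type equation `Δ log w = w²`: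
if `w, v` are positive `C²` solutions on a bounded open set `K ⊆ ℝ²`,
and `log w − log v` extends continuously to `closure K` with
`log w − log v ≤ 0` on `∂K`, then `w ≤ v` throughout `K`. -/
theorem stmt3 (K : Set ℂ) (hK : IsOpen K) (hKb : Bornology.IsBounded K)
    (w v : ℂ → ℝ)
    (hw : ContDiffOn ℝ 2 w K) (hv : ContDiffOn ℝ 2 v K)
    (hwpos : ∀ z ∈ K, 0 < w z) (hvpos : ∀ z ∈ K, 0 < v z)
    (hweq : ∀ z ∈ K, lap (fun ζ => Real.log (w ζ)) z = (w z) ^ 2)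
    (hveq : ∀ z ∈ K, lap (fun ζ => Real.log (v ζ)) z = (v z) ^ 2)
    (hcont : ContinuousOn (fun z => Real.log (w z) - Real.log (v z)) (closure K))
    (hbdry : ∀ z ∈ frontier K, Real.log (w z) - Real.log (v z) ≤ 0) :
    ∀ z ∈ K, w z ≤ v z := by
  have hlog_w : ContDiffOn ℝ 2 (fun z => Real.log (w z)) K :=
    hw.log fun z hz => (hwpos z hz).ne'
  have hlog_v : ContDiffOn ℝ 2 (fun z => Real.log (v z)) K :=
    hv.log fun z hz => (hvpos z hz).ne'
  have hlap : ∀ z ∈ K, 0 < Real.log (w z) - Real.log (v z) →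
      0 < lap (fun z => Real.log (w z) - Real.log (v z)) z := by
    intro z hz hpos
    have hvw : v z < w z := (Real.log_lt_log_iff (hvpos z hz) (hwpos z hz)).mp (sub_pos.mp hpos)
    have hnhds := hK.mem_nhds hz
    rw [lap_sub (hlog_w.contDiffAt hnhds) (hlog_v.contDiffAt hnhds), hweq z hz, hveq z hz]
    nlinarith [hvpos z hz]
  intro z hz
  have hle := nonpos_of_lap_pos_of_frontier_nonpos hK hKb (hlog_w.sub hlog_v) hcont hbdry hlap z hz
  exact (Real.log_le_log_iff (hwpos z hz) (hvpos z hz)).mp (sub_nonpos.mp hle)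
end
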